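/- Let G be a group with an automatic structure L ⊆ A* for π₁ : A* → G, and let φ be an endomorphism of G with finite kernel whose image Gφ is L-quasiconvex. Then there exist a finite alphabet C, a surjective monoid homomorphism π₃ : C* → G, and an automatic structure K ⊆ C* for π₃ such that the synchronous BRP holds for (φ, K, L). -/
import Mathlib


open scoped NNReal

namespace Auto

/-- The generating set `Aπ ∪ (Aπ)⁻¹` of `G` determined by `π : A* → G`. -/
def gens {A G : Type*} [Group G] (π : FreeMonoid A →* G) : Set G :=
  (Set.range fun a : A => π (FreeMonoid.of a)) ∪
    Set.range fun a : A => (π (FreeMonoid.of a))⁻¹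

/-- The word metric `d_A` on `G`: the least `n` such that `g⁻¹h` is a product of `n`
elements of `Aπ ∪ (Aπ)⁻¹`. -/
noncomputable def wdist {A G : Type*} [Group G] (π : FreeMonoid A →* G) (g h : G) : ℕ :=
  sInf {n : ℕ | ∃ l : List G, l.length = n ∧ (∀ x ∈ l, x ∈ gens π) ∧ l.prod = g⁻¹ * h}

/-- Evaluation of a word of `A*` in `G`. -/
def evalW {A G : Type*} [Group G] (π : FreeMonoid A →* G) (w : List A) : G :=
  π (FreeMonoid.ofList w)

/-- `u` and `v` `p`-fellow travel: `d_A(u^[n]π, v^[n]π) ≤ p` for all `n`. -/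
def FellowTravel {A G : Type*} [Group G] (π : FreeMonoid A →* G) (p : ℝ≥0)
    (u v : List A) : Prop :=
  ∀ n : ℕ, (wdist π (evalW π (u.take n)) (evalW π (v.take n)) : ℝ≥0) ≤ p

/-- `u` and `v` are `p`-meeting-fellow-travellers. -/
def MFT {A G : Type*} [Group G] (π : FreeMonoid A →* G) (p : ℝ≥0) (u v : List A) : Prop :=
  FellowTravel π p u v ∧ evalW π u = evalW π v

/-- A language is regular if it is accepted by a finite-state automaton. -/
def IsRegular {A : Type*} (L : Language A) : Prop :=
  ∃ (σ : Type) (_ : Fintype σ) (M : DFA A σ), M.accepts = L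

/-- `L` is an automatic structure for `π`. -/
structure IsAutomaticStructure {A G : Type*} [Group G] (π : FreeMonoid A →* G)
    (L : Language A) : Prop where
  regular : IsRegular L
  onto : ∀ g : G, ∃ w ∈ L, evalW π w = g
  ft : ∃ N : ℕ, ∀ u ∈ L, ∀ v ∈ L,
    wdist π (evalW π u) (evalW π v) ≤ 1 → FellowTravel π N u v

/-- Evaluation of an element of `A ∪ {ε}`. -/
def evalOpt {A G : Type*} [Group G] (π : FreeMonoid A →* G) : Option A → G
  | none => 1
  | some a => π (FreeMonoid.of a)

/-- `L` is a biautomatic structure for `π`. -/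
structure IsBiautomaticStructure {A G : Type*} [Group G] (π : FreeMonoid A →* G)
    (L : Language A) extends IsAutomaticStructure π L : Prop where
  bi : ∃ N : ℕ, ∀ u ∈ L, ∀ v ∈ L, ∀ a : Option A,
    evalW π v = evalOpt π a * evalW π u →
    ∀ n : ℕ, wdist π (evalOpt π a * evalW π (u.take n)) (evalW π (v.take n)) ≤ N

/-- A language is factorial if it is closed under taking factors. -/
def IsFactorial {A : Type*} (L : Language A) : Prop :=
  ∀ u ∈ L, ∀ v : List A, v <:+: u → v ∈ L

/-- `D : ℝ≥0 → ℝ≥0` is a departure function for `(G, L)`. -/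
def IsDepartureFunction {A G : Type*} [Group G] (π : FreeMonoid A →* G) (L : Language A)
    (D : ℝ≥0 → ℝ≥0) : Prop :=
  ∀ w ∈ L, ∀ r : ℝ≥0, ∀ s t : ℕ, D r ≤ (t : ℝ≥0) → s + t ≤ w.length →
    r < (wdist π (evalW π (w.take s)) (evalW π (w.take (s + t))) : ℝ≥0)

/-- Every point of `S` is within distance `N` of `T`. -/
def NbhdIn {A G : Type*} [Group G] (π : FreeMonoid A →* G) (N : ℕ) (S T : Set G) : Prop :=
  ∀ s ∈ S, ∃ t ∈ T, wdist π s t ≤ N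

/-- The Hausdorff distance between `S` and `T` is at most `N`. -/
def HausdorffLE {A G : Type*} [Group G] (π : FreeMonoid A →* G) (N : ℕ)
    (S T : Set G) : Prop :=
  NbhdIn π N S T ∧ NbhdIn π N T S

/-- `H` is an `L`-quasiconvex subgroup of `G`. -/
def IsQuasiconvex {A G : Type*} [Group G] (π : FreeMonoid A →* G) (L : Language A)
    (H : Subgroup G) : Prop :=
  ∃ k : ℕ, ∀ h ∈ H, ∀ h' ∈ H, ∀ w ∈ L, h * evalW π w = h' →
    ∀ n : ℕ, ∃ z ∈ H, wdist π (h * evalW π (w.take n)) z ≤ k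

/-- The bounded reduction property for `(φ, L, L')`. -/
def BRP {A B G G' : Type*} [Group G] [Group G'] (π : FreeMonoid A →* G)
    (π' : FreeMonoid B →* G') (φ : G →* G') (L : Language A) (L' : Language B) : Prop :=
  ∃ N : ℕ, ∀ x : G, ∀ α ∈ L, ∀ β ∈ L', evalW π' β = φ (evalW π α) →
    HausdorffLE π' N (Set.range fun n : ℕ => φ (x * evalW π (α.take n)))
      (Set.range fun n : ℕ => φ x * evalW π' (β.take n))

/-- The synchronous bounded reduction property for `(φ, L, L')`. -/
def SyncBRP {A B G G' : Type*} [Group G] [Group G'] (π : FreeMonoid A →* G)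
    (π' : FreeMonoid B →* G') (φ : G →* G') (L : Language A) (L' : Language B) : Prop :=
  ∃ N : ℕ, ∀ x : G, ∀ α ∈ L, ∀ β ∈ L', evalW π' β = φ (evalW π α) →
    ∀ n : ℕ, wdist π' (φ (x * evalW π (α.take n))) (φ x * evalW π' (β.take n)) ≤ N

/-- The fellow traveller bounded reduction property (FT-BRP) for `(φ, L, L')`. -/
def FTBRP {A B G G' : Type*} [Group G] [Group G'] (π : FreeMonoid A →* G)
    (π' : FreeMonoid B →* G') (φ : G →* G') (L : Language A) (L' : Language B) : Prop :=
  ∀ p : ℝ≥0, ∃ q : ℝ≥0,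
    ∀ u₁ ∈ L, ∀ u₂ ∈ L, ∀ u₃ ∈ L, ∀ u₁' ∈ L', ∀ u₂' ∈ L', ∀ u₃' ∈ L',
      evalW π' u₁' = φ (evalW π u₁) → evalW π' u₂' = φ (evalW π u₂) →
        evalW π' u₃' = φ (evalW π u₃) →
          MFT π p (u₁ ++ u₂) u₃ → MFT π' q (u₁' ++ u₂') u₃'

/-- The natural homomorphism `(A ⊔ B)* → G` agreeing with `π₁` on `A` and `π₂` on `B`. -/
def sumHom {A B G : Type*} [Group G] (π₁ : FreeMonoid A →* G) (π₂ : FreeMonoid B →* G) :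
    FreeMonoid (A ⊕ B) →* G :=
  FreeMonoid.lift (Sum.elim (fun a => π₁ (FreeMonoid.of a)) fun b => π₂ (FreeMonoid.of b))

/-- The union `L₁ ∪ L₂` viewed as a language over `A ⊔ B`. -/
def unionLang {A B : Type*} (L₁ : Language A) (L₂ : Language B) : Language (A ⊕ B) :=
  {w : List (A ⊕ B) | (∃ u ∈ L₁, w = u.map Sum.inl) ∨ ∃ v ∈ L₂, w = v.map Sum.inr}

/-- `L` is an asynchronous automatic structure for `π`. -/
def IsAsyncAutomaticStructure {A G : Type*} [Group G] (π : FreeMonoid A →* G)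
    (L : Language A) : Prop :=
  IsRegular L ∧ (∀ g : G, ∃ w ∈ L, evalW π w = g) ∧
    ∃ p : ℕ, ∀ u ∈ L, ∀ v ∈ L, wdist π (evalW π u) (evalW π v) ≤ 1 →
      ∃ φ ψ : ℕ → ℕ, Monotone φ ∧ Monotone ψ ∧
        Function.Surjective φ ∧ Function.Surjective ψ ∧
          ∀ t : ℕ, wdist π (evalW π (u.take (φ t))) (evalW π (v.take (ψ t))) ≤ p

/-- `L₁` and `L₂` are equivalent automatic structures. -/
def LangEquivalent {A B G : Type*} [Group G] (π₁ : FreeMonoid A →* G)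
    (π₂ : FreeMonoid B →* G) (L₁ : Language A) (L₂ : Language B) : Prop :=
  IsAsyncAutomaticStructure (sumHom π₁ π₂) (unionLang L₁ L₂)

/-- `L₁` and `L₂` are synchronously equivalent automatic structures. -/
def LangSyncEquivalent {A B G : Type*} [Group G] (π₁ : FreeMonoid A →* G)
    (π₂ : FreeMonoid B →* G) (L₁ : Language A) (L₂ : Language B) : Prop :=
  IsAutomaticStructure (sumHom π₁ π₂) (unionLang L₁ L₂)

/-- `L` has the Hausdorff closeness property. -/
def HausClose {A G : Type*} [Group G] (π : FreeMonoid A →* G) (L : Language A) : Prop :=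
  ∃ N : ℕ, ∀ u ∈ L, ∀ v ∈ L, wdist π (evalW π u) (evalW π v) ≤ 1 →
    HausdorffLE π N (Set.range fun n : ℕ => evalW π (u.take n))
      (Set.range fun n : ℕ => evalW π (v.take n))

/-- The padded alphabet `C = (A×B) ∪ (A×{$}) ∪ ({$}×B)` of convolution. -/
abbrev ConvAlphabet (A B : Type*) := (A × B) ⊕ (A ⊕ B)

/-- The convolution `u ⋄ v` of two words. -/
def conv {A B : Type*} : List A → List B → List (ConvAlphabet A B)
  | [], [] => []
  | [], b :: v => Sum.inr (Sum.inr b) :: conv [] v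
  | a :: u, [] => Sum.inr (Sum.inl a) :: conv u []
  | a :: u, b :: v => Sum.inl (a, b) :: conv u v
  termination_by u v => u.length + v.length

/-- The convolution `L₁ ⋄ L₂` of two languages. -/
def convLang {A B : Type*} (L₁ : Language A) (L₂ : Language B) :
    Language (ConvAlphabet A B) :=
  {w : List (ConvAlphabet A B) | ∃ u ∈ L₁, ∃ v ∈ L₂, w = conv u v}

/-- The natural homomorphism `C* → G × G'` for the convolution alphabet. -/
def convHom {A B G G' : Type*} [Group G] [Group G'] (π₁ : FreeMonoid A →* G)
    (π₂ : FreeMonoid B →* G') : FreeMonoid (ConvAlphabet A B) →* G × G' :=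
  FreeMonoid.lift fun c =>
    match c with
    | Sum.inl (a, b) => (π₁ (FreeMonoid.of a), π₂ (FreeMonoid.of b))
    | Sum.inr (Sum.inl a) => (π₁ (FreeMonoid.of a), 1)
    | Sum.inr (Sum.inr b) => (1, π₂ (FreeMonoid.of b))

/-- A group is automatic if it admits an automatic structure over some finite alphabet. -/
def IsAutomaticGroup (G : Type*) [Group G] : Prop :=
  ∃ (A : Type) (_ : Fintype A) (π : FreeMonoid A →* G) (L : Language A),
    IsAutomaticStructure π L

end Auto

open Auto

namespace EstsyncAux

open Auto List

section WordMetric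

variable {A G : Type*} [Group G] (π : FreeMonoid A →* G)

theorem evalW_nil : evalW π ([] : List A) = 1 := by
  simp [evalW, FreeMonoid.ofList_nil]

theorem evalW_cons (a : A) (l : List A) :
    evalW π (a :: l) = π (FreeMonoid.of a) * evalW π l := by
  simp [evalW, FreeMonoid.ofList_cons]

theorem evalW_append (l₁ l₂ : List A) :
    evalW π (l₁ ++ l₂) = evalW π l₁ * evalW π l₂ := by
  simp [evalW, FreeMonoid.ofList_append]

theorem evalW_eq_prod (l : List A) :
    evalW π l = (l.map fun a => π (FreeMonoid.of a)).prod := by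
  induction l with
  | nil => simp [evalW_nil]
  | cons a l ih => simp [evalW_cons, ih]

theorem gens_inv {x : G} (hx : x ∈ gens π) : x⁻¹ ∈ gens π := by
  rcases hx with ⟨a, rfl⟩ | ⟨a, rfl⟩
  · exact Or.inr ⟨a, rfl⟩
  · exact Or.inl ⟨a, by simp⟩

theorem wdist_le_of_list {g h : G} {l : List G} (hl : ∀ x ∈ l, x ∈ gens π)
    (hp : l.prod = g⁻¹ * h) {n : ℕ} (hn : l.length ≤ n) : wdist π g h ≤ n :=
  le_trans (Nat.sInf_le ⟨l, rfl, hl, hp⟩) hn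

theorem wdist_self (g : G) : wdist π g g = 0 :=
  Nat.le_zero.mp (wdist_le_of_list π (l := []) (by simp) (by simp) le_rfl)

theorem wdist_mul_left (x g h : G) : wdist π (x * g) (x * h) = wdist π g h := by
  unfold wdist
  congr 1
  ext n
  constructor <;> rintro ⟨l, h1, h2, h3⟩ <;> exact ⟨l, h1, h2, by rw [h3]; group⟩

theorem wdist_comm (g h : G) : wdist π g h = wdist π h g := by
  unfold wdist
  congr 1
  ext n
  constructor <;> rintro ⟨l, h1, h2, h3⟩ <;>
    exact ⟨(l.map fun x => x⁻¹).reverse, by simp [h1],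
      fun x hx => by
        simp only [List.mem_reverse, List.mem_map] at hx
        rcases hx with ⟨y, hy, rfl⟩
        exact gens_inv π (h2 y hy),
      by rw [← List.prod_inv_reverse, h3]; group⟩

theorem wdist_one_eq (g h : G) : wdist π g h = wdist π 1 (g⁻¹ * h) := by
  conv_lhs => rw [show g = g * 1 by group, show h = g * (g⁻¹ * h) by group]
  rw [wdist_mul_left]

variable (hs : Function.Surjective π)

include hs in
theorem wdist_set_nonempty (g h : G) :
    {n : ℕ | ∃ l : List G, l.length = n ∧ (∀ x ∈ l, x ∈ gens π) ∧
      l.prod = g⁻¹ * h}.Nonempty := by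
  obtain ⟨w, hw⟩ := hs (g⁻¹ * h)
  refine ⟨(FreeMonoid.toList w).length, (FreeMonoid.toList w).map fun a => π (FreeMonoid.of a),
    by simp, ?_, ?_⟩
  · rintro x hx
    simp only [List.mem_map] at hx
    rcases hx with ⟨a, _, rfl⟩
    exact Or.inl ⟨a, rfl⟩
  · rw [← evalW_eq_prod]
    simpa [evalW] using hw

include hs in
theorem exists_list_of_wdist (g h : G) :
    ∃ l : List G, l.length = wdist π g h ∧ (∀ x ∈ l, x ∈ gens π) ∧ l.prod = g⁻¹ * h :=
  Nat.sInf_mem (wdist_set_nonempty π hs g h)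

include hs in
theorem wdist_triangle (g h h' : G) :
    wdist π g h' ≤ wdist π g h + wdist π h h' := by
  obtain ⟨l₁, hl₁, hg₁, hp₁⟩ := exists_list_of_wdist π hs g h
  obtain ⟨l₂, hl₂, hg₂, hp₂⟩ := exists_list_of_wdist π hs h h'
  refine wdist_le_of_list π (l := l₁ ++ l₂) ?_ ?_ (by simp [hl₁, hl₂])
  · intro x hx
    rcases List.mem_append.mp hx with hx | hx
    · exact hg₁ x hx
    · exact hg₂ x hx
  · rw [List.prod_append, hp₁, hp₂]; group

theorem wdist_one_inv (g : G) : wdist π 1 g⁻¹ = wdist π 1 g := by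
  rw [wdist_comm, wdist_one_eq]
  simp

theorem gens_finite [Fintype A] : (gens π).Finite :=
  (Set.finite_range _).union (Set.finite_range _)

theorem lists_finite {S : Set G} (hS : S.Finite) (R : ℕ) :
    {l : List G | l.length ≤ R ∧ ∀ x ∈ l, x ∈ S}.Finite := by
  haveI : Finite ↥S := hS
  have h1 : {l : List ↥S | l.length ≤ R}.Finite := List.finite_length_le _ R
  refine Set.Finite.subset (h1.image (List.map Subtype.val)) ?_
  rintro l ⟨hlen, hmem⟩
  refine ⟨l.attach.map fun x => ⟨x.1, hmem x.1 x.2⟩, by simpa using hlen, ?_⟩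
  simp [List.map_map, Function.comp]

include hs in
theorem ball_finite [Fintype A] (R : ℕ) : {x : G | wdist π 1 x ≤ R}.Finite := by
  refine Set.Finite.subset ((lists_finite (gens_finite π) R).image List.prod) ?_
  intro x hx
  obtain ⟨l, hl, hg, hp⟩ := exists_list_of_wdist π hs 1 x
  exact ⟨l, ⟨hl.le.trans hx, hg⟩, by simpa using hp⟩

end WordMetric

end EstsyncAux

namespace EstsyncAux

open Auto

section Construction

/-- The alphabet for the pulled-back structure. -/
abbrev CC (m p r : ℕ) : Type := (Fin m × Fin p × Fin m) ⊕ Fin r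

variable {A G : Type*} [Group G] (π₁ : FreeMonoid A →* G) (φ : G →* G)
  {m p r : ℕ} (Y : Fin m → G) (aV : Fin p → A) (Z : Fin r → G) (sec : G → G)
  (i₁ : Fin m) (L : Language A)

/-- The group increment encoded by a letter. -/
def inc (c : Fin m × Fin p × Fin m) : G :=
  (Y c.1)⁻¹ * π₁ (FreeMonoid.of (aV c.2.1)) * Y c.2.2

/-- The evaluation homomorphism on the new alphabet. -/
def pi3 : FreeMonoid (CC m p r) →* G :=
  FreeMonoid.lift (Sum.elim (fun c => sec (inc π₁ Y aV c)) Z)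

theorem pi3_of_inl (c : Fin m × Fin p × Fin m) :
    pi3 π₁ Y aV Z sec (FreeMonoid.of (Sum.inl c)) = sec (inc π₁ Y aV c) := by
  simp [pi3]

theorem pi3_of_inr (t : Fin r) :
    pi3 π₁ Y aV Z sec (FreeMonoid.of (Sum.inr t)) = Z t := by
  simp [pi3]

/-- A run is a consistent chain of letters with increments in the image of `φ`. -/
def RunFits : Fin m → List (Fin m × Fin p × Fin m) → Prop
  | _, [] => True
  | j, c :: l => c.1 = j ∧ inc π₁ Y aV c ∈ φ.range ∧ RunFits c.2.2 l

/-- The final ball-index of a run. -/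
def RunEnd : Fin m → List (Fin m × Fin p × Fin m) → Fin m
  | j, [] => j
  | _, c :: l => RunEnd c.2.2 l

/-- The projection of a run to a word over `A`. -/
def projARun : List (Fin m × Fin p × Fin m) → List A :=
  List.map fun c => aV c.2.1

/-- The language of the pulled-back automatic structure. -/
def KK : Language (CC m p r) :=
  {α | ∃ (run : List (Fin m × Fin p × Fin m)) (tl : List (Fin r)),
    tl.length ≤ 1 ∧ α = run.map Sum.inl ++ tl.map Sum.inr ∧
    RunFits π₁ φ Y aV i₁ run ∧ RunEnd i₁ run = i₁ ∧ projARun aV run ∈ L}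

theorem runFits_take {j : Fin m} :
    ∀ (run : List (Fin m × Fin p × Fin m)) (_ : RunFits π₁ φ Y aV j run) (n : ℕ),
      RunFits π₁ φ Y aV j (run.take n) := by
  intro run
  induction run generalizing j with
  | nil => intro _ n; simp [RunFits]
  | cons c l ih =>
    rintro ⟨h1, h2, h3⟩ n
    cases n with
    | zero => simp [RunFits]
    | succ n => exact ⟨h1, h2, ih h3 n⟩

theorem runFits_append {j : Fin m} :
    ∀ (run : List (Fin m × Fin p × Fin m)) (_ : RunFits π₁ φ Y aV j run)
      (c : Fin m × Fin p × Fin m) (_ : c.1 = RunEnd j run)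
      (_ : inc π₁ Y aV c ∈ φ.range),
      RunFits π₁ φ Y aV j (run ++ [c]) := by
  intro run
  induction run generalizing j with
  | nil => intro _ c h1 h2; exact ⟨h1, h2, trivial⟩
  | cons d l ih =>
    rintro ⟨h1, h2, h3⟩ c hc1 hc2
    exact ⟨h1, h2, ih h3 c hc1 hc2⟩

theorem runEnd_append {j : Fin m} :
    ∀ (run : List (Fin m × Fin p × Fin m)) (c : Fin m × Fin p × Fin m),
      RunEnd j (run ++ [c]) = c.2.2 := by
  intro run
  induction run generalizing j with
  | nil => intro c; rfl
  | cons d l ih => intro c; exact ih (j := d.2.2) c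

variable (hsec : ∀ x ∈ φ.range, φ (sec x) = x)

include hsec in
theorem tel :
    ∀ (run : List (Fin m × Fin p × Fin m)) (j : Fin m) (_ : RunFits π₁ φ Y aV j run),
      φ (evalW (pi3 π₁ Y aV Z sec) (run.map Sum.inl)) =
        (Y j)⁻¹ * evalW π₁ (projARun aV run) * Y (RunEnd j run) := by
  intro run
  induction run with
  | nil => intro j _; simp [evalW_nil, projARun, RunEnd]
  | cons c l ih =>
    rintro j ⟨h1, h2, h3⟩
    rw [List.map_cons, evalW_cons, map_mul, pi3_of_inl, hsec _ h2, ih c.2.2 h3]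
    show inc π₁ Y aV c * _ = _
    rw [inc, h1]
    have : projARun aV (c :: l) = aV c.2.1 :: projARun aV l := rfl
    rw [this, evalW_cons]
    have : RunEnd j (c :: l) = RunEnd c.2.2 l := rfl
    rw [this]
    group

variable (hZ : ∀ t : Fin r, φ (Z t) = 1)

include hZ in
theorem tail_eval : ∀ tl : List (Fin r),
    φ (evalW (pi3 π₁ Y aV Z sec) (tl.map Sum.inr)) = 1 := by
  intro tl
  induction tl with
  | nil => simp [evalW_nil]
  | cons t l ih => rw [List.map_cons, evalW_cons, map_mul, pi3_of_inr, hZ, one_mul, ih]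

variable (hi₁ : Y i₁ = 1)

include hsec hZ hi₁ in
/-- Master structural lemma about elements of `KK`. -/
theorem kpre {α : List (CC m p r)} (hα : α ∈ KK π₁ φ Y aV i₁ L)
    (k : ℕ) (hY : ∀ i, wdist π₁ 1 (Y i) ≤ k) :
    ∃ w ∈ L, φ (evalW (pi3 π₁ Y aV Z sec) α) = evalW π₁ w ∧
      ∀ n : ℕ, wdist π₁ (φ (evalW (pi3 π₁ Y aV Z sec) (α.take n))) (evalW π₁ (w.take n)) ≤ k := by
  obtain ⟨run, tl, htl, rfl, hfits, hend, hwL⟩ := hα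
  refine ⟨projARun aV run, hwL, ?_⟩
  have key : ∀ n : ℕ, φ (evalW (pi3 π₁ Y aV Z sec) ((run.map Sum.inl ++ tl.map Sum.inr).take n)) =
      evalW π₁ ((projARun aV run).take n) * Y (RunEnd i₁ (run.take n)) := by
    intro n
    rw [List.take_append, ← List.map_take, ← List.map_take, evalW_append,
      map_mul, tail_eval π₁ φ Y aV Z sec hZ, mul_one,
      tel π₁ φ Y aV Z sec hsec _ i₁ (runFits_take π₁ φ Y aV run hfits n), hi₁, inv_one, one_mul,
      projARun, ← List.map_take]
  constructor
  · have := key (run.map Sum.inl ++ tl.map Sum.inr).length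
    rw [List.take_length] at this
    rw [this]
    have hlen : run.length ≤ (run.map Sum.inl ++ tl.map Sum.inr).length := by
      simp
    rw [List.take_of_length_le (by simpa [projARun] using hlen),
      List.take_of_length_le hlen, hend, hi₁, mul_one]
  · intro n
    rw [key n]
    rw [wdist_one_eq]
    have e1 : (evalW π₁ ((projARun aV run).take n) * Y (RunEnd i₁ (run.take n)))⁻¹ *
        evalW π₁ ((projARun aV run).take n) = (Y (RunEnd i₁ (run.take n)))⁻¹ := by group
    rw [e1, wdist_one_inv]
    exact hY _

end Construction

end EstsyncAux

namespace EstsyncAux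

open Auto

section Onto

variable {A G : Type*} [Group G] (π₁ : FreeMonoid A →* G) (φ : G →* G)
  {m p r : ℕ} (Y : Fin m → G) (aV : Fin p → A) (Z : Fin r → G) (sec : G → G)
  (i₁ : Fin m) (L : Language A) (aI : A → Fin p) (k : ℕ)

theorem konto
    (haV : ∀ a, aV (aI a) = a)
    (hYinj : Function.Injective Y)
    (hYsur : ∀ y : G, wdist π₁ 1 y ≤ k → ∃ i, Y i = y)
    (hi₁ : Y i₁ = 1)
    (hZsur : ∀ z : G, φ z = 1 → ∃ t, Z t = z)
    (hsec : ∀ x ∈ φ.range, φ (sec x) = x)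
    (hqck : ∀ h ∈ φ.range, ∀ h' ∈ φ.range, ∀ w ∈ L, h * evalW π₁ w = h' →
      ∀ n : ℕ, ∃ z ∈ φ.range, wdist π₁ (h * evalW π₁ (w.take n)) z ≤ k)
    (hLonto : ∀ g : G, ∃ w ∈ L, evalW π₁ w = g) :
    ∀ g : G, ∃ α ∈ KK π₁ φ Y aV i₁ L, evalW (pi3 π₁ Y aV Z sec) α = g := by
  intro g
  obtain ⟨w, hwL, hwg⟩ := hLonto (φ g)
  have hwr : evalW π₁ w ∈ φ.range := ⟨g, hwg.symm⟩
  have hq : ∀ n : ℕ, ∃ z ∈ φ.range, wdist π₁ (1 * evalW π₁ (w.take n)) z ≤ k :=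
    hqck 1 (one_mem _) (evalW π₁ w) hwr w hwL (one_mul _)
  choose zz hzmem hzd using hq
  have hq2 : ∀ n : ℕ, ∃ z : G, z ∈ φ.range ∧ wdist π₁ (evalW π₁ (w.take n)) z ≤ k ∧
      ((n = 0 ∨ w.length ≤ n) → z = evalW π₁ (w.take n)) := by
    intro n
    by_cases hcase : n = 0 ∨ w.length ≤ n
    · refine ⟨evalW π₁ (w.take n), ?_, by simp [wdist_self], fun _ => rfl⟩
      rcases hcase with h0 | hlen
      · subst h0; simpa [evalW_nil] using (one_mem φ.range)
      · rw [List.take_of_length_le hlen]; exact hwr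
    · exact ⟨zz n, hzmem n, by simpa using hzd n, fun h => absurd h hcase⟩
  choose hfun hmem hd hdeg using hq2
  set y : ℕ → G := fun n => (evalW π₁ (w.take n))⁻¹ * hfun n with hy
  have hyB : ∀ n, wdist π₁ 1 (y n) ≤ k := by
    intro n
    have := hd n
    rwa [wdist_one_eq] at this
  have hy1 : ∀ n, n = 0 ∨ w.length ≤ n → y n = 1 := by
    intro n hn
    simp only [hy, hdeg n hn, inv_mul_cancel]
  choose iY hiY using fun n => hYsur (y n) (hyB n)
  have hstep : ∀ n (hn : n < w.length),
      evalW π₁ (w.take (n + 1)) = evalW π₁ (w.take n) * π₁ (FreeMonoid.of w[n]) := by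
    intro n hn
    rw [List.take_succ, List.getElem?_eq_getElem hn, Option.toList_some, evalW_append,
      evalW_cons, evalW_nil, mul_one]
  have main : ∀ n : ℕ, n ≤ w.length → ∃ run : List (Fin m × Fin p × Fin m),
      RunFits π₁ φ Y aV i₁ run ∧ RunEnd i₁ run = iY n ∧ projARun aV run = w.take n := by
    intro n
    induction n with
    | zero =>
      intro _
      refine ⟨[], trivial, ?_, by simp [projARun]⟩
      apply hYinj
      rw [hiY 0, hy1 0 (Or.inl rfl)]
      exact hi₁.trans rfl |>.symm ▸ hi₁
    | succ n ih =>
      intro hn1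
      obtain ⟨run, hfits, hend, hproj⟩ := ih (Nat.le_of_succ_le hn1)
      have hn : n < w.length := hn1
      set c : Fin m × Fin p × Fin m := (iY n, aI w[n], iY (n + 1)) with hc
      have hgood : inc π₁ Y aV c ∈ φ.range := by
        have : inc π₁ Y aV c = (hfun n)⁻¹ * hfun (n + 1) := by
          rw [inc]
          show (Y (iY n))⁻¹ * π₁ (FreeMonoid.of (aV (aI w[n]))) * Y (iY (n + 1)) = _
          rw [hiY n, hiY (n + 1), haV, hy]
          simp only
          rw [hstep n hn]
          group
        rw [this]
        exact mul_mem (inv_mem (hmem n)) (hmem (n + 1))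
      refine ⟨run ++ [c], runFits_append π₁ φ Y aV run hfits c (by rw [hend]) hgood,
        runEnd_append run c, ?_⟩
      simp only [projARun] at hproj ⊢
      rw [List.map_append, hproj, List.map_cons, List.map_nil]
      show w.take n ++ [aV (aI w[n])] = w.take (n + 1)
      rw [haV, List.take_succ, List.getElem?_eq_getElem hn, Option.toList_some]
  obtain ⟨run, hfits, hend, hproj⟩ := main w.length le_rfl
  have hend' : RunEnd i₁ run = i₁ := by
    rw [hend]
    apply hYinj
    rw [hiY, hy1 w.length (Or.inr le_rfl), hi₁]
  rw [List.take_length] at hproj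
  have hφgK : φ (evalW (pi3 π₁ Y aV Z sec) (run.map Sum.inl)) = φ g := by
    rw [tel π₁ φ Y aV Z sec hsec run i₁ hfits, hend', hi₁, hproj, hwg]
    group
  have hker : φ ((evalW (pi3 π₁ Y aV Z sec) (run.map Sum.inl))⁻¹ * g) = 1 := by
    rw [map_mul, map_inv, hφgK]
    group
  obtain ⟨t, ht⟩ := hZsur _ hker
  refine ⟨run.map Sum.inl ++ [Sum.inr t], ⟨run, [t], by simp, by simp, hfits, hend', by
    rw [hproj]; exact hwL⟩, ?_⟩
  rw [evalW_append, evalW_cons, evalW_nil, mul_one, pi3_of_inr, ht]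
  group

end Onto

end EstsyncAux

namespace EstsyncAux

open Auto

section Automata

variable {C B : Type*} {σ₁ σ₂ : Type*}

/-- Product of two DFAs, accepting the intersection. -/
def prodDFA (M₁ : DFA C σ₁) (M₂ : DFA C σ₂) : DFA C (σ₁ × σ₂) where
  step := fun s c => (M₁.step s.1 c, M₂.step s.2 c)
  start := (M₁.start, M₂.start)
  accept := {s | s.1 ∈ M₁.accept ∧ s.2 ∈ M₂.accept}

theorem prodDFA_evalFrom (M₁ : DFA C σ₁) (M₂ : DFA C σ₂) :
    ∀ (l : List C) (s : σ₁ × σ₂),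
      (prodDFA M₁ M₂).evalFrom s l = (M₁.evalFrom s.1 l, M₂.evalFrom s.2 l) := by
  intro l
  induction l with
  | nil => intro s; rfl
  | cons c l ih =>
    intro s
    show (prodDFA M₁ M₂).evalFrom ((prodDFA M₁ M₂).step s c) l = _
    rw [ih]
    rfl

theorem prodDFA_accepts (M₁ : DFA C σ₁) (M₂ : DFA C σ₂) (l : List C) :
    l ∈ (prodDFA M₁ M₂).accepts ↔ l ∈ M₁.accepts ∧ l ∈ M₂.accepts := by
  simp only [DFA.mem_accepts, DFA.eval, prodDFA_evalFrom]
  exact Iff.rfl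

/-- Pullback of a DFA along a letter-to-word map. -/
def comapDFA (f : C → List B) (M : DFA B σ₁) : DFA C σ₁ where
  step := fun s c => M.evalFrom s (f c)
  start := M.start
  accept := M.accept

theorem comapDFA_evalFrom (f : C → List B) (M : DFA B σ₁) :
    ∀ (l : List C) (s : σ₁),
      (comapDFA f M).evalFrom s l = M.evalFrom s (l.flatMap f) := by
  intro l
  induction l with
  | nil => intro s; rfl
  | cons c l ih =>
    intro s
    show (comapDFA f M).evalFrom (M.evalFrom s (f c)) l = _
    rw [ih, List.flatMap_cons, DFA.evalFrom_of_append]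

theorem comapDFA_accepts (f : C → List B) (M : DFA B σ₁) (l : List C) :
    l ∈ (comapDFA f M).accepts ↔ l.flatMap f ∈ M.accepts := by
  simp only [DFA.mem_accepts, DFA.eval, comapDFA_evalFrom]
  exact Iff.rfl

end Automata

section ConsDFA

variable {A G : Type*} [Group G] (π₁ : FreeMonoid A →* G) (φ : G →* G)
  {m p r : ℕ} (Y : Fin m → G) (aV : Fin p → A) (i₁ : Fin m)

open Classical in
/-- The consistency-checking DFA. -/
noncomputable def MQ : DFA (CC m p r) (Fin m ⊕ Fin 2) where
  step := fun q c =>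
    match q, c with
    | .inl j, .inl cl =>
        if cl.1 = j ∧ inc π₁ Y aV cl ∈ φ.range then .inl cl.2.2 else .inr 1
    | .inl j, .inr _ => if j = i₁ then .inr 0 else .inr 1
    | .inr _, _ => .inr 1
  start := .inl i₁
  accept := {q | q = .inl i₁ ∨ q = .inr 0}

theorem MQ_dead : ∀ l : List (CC m p r),
    (MQ (r := r) π₁ φ Y aV i₁).evalFrom (.inr 1) l = .inr 1 := by
  intro l
  induction l with
  | nil => rfl
  | cons c l ih => exact ih

theorem MQ_run (run : List (Fin m × Fin p × Fin m)) :
    ∀ j : Fin m, RunFits π₁ φ Y aV j run →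
      (MQ (r := r) π₁ φ Y aV i₁).evalFrom (.inl j) (run.map Sum.inl) = .inl (RunEnd j run) := by
  induction run with
  | nil => intro j _; rfl
  | cons c l ih =>
    rintro j ⟨h1, h2, h3⟩
    show (MQ (r := r) π₁ φ Y aV i₁).evalFrom ((MQ (r := r) π₁ φ Y aV i₁).step (.inl j) (.inl c)) _ = _
    have : (MQ (r := r) π₁ φ Y aV i₁).step (.inl j) (.inl c) = .inl c.2.2 := by
      simp only [MQ]
      rw [if_pos ⟨h1, h2⟩]
    rw [this]
    exact ih c.2.2 h3

theorem MQ_sound : ∀ (α : List (CC m p r)) (j : Fin m),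
    (MQ (r := r) π₁ φ Y aV i₁).evalFrom (.inl j) α ∈ (MQ (r := r) π₁ φ Y aV i₁).accept →
      ∃ (run : List (Fin m × Fin p × Fin m)) (tl : List (Fin r)),
        tl.length ≤ 1 ∧ α = run.map Sum.inl ++ tl.map Sum.inr ∧
        RunFits π₁ φ Y aV j run ∧ RunEnd j run = i₁ := by
  intro α
  induction α with
  | nil =>
    intro j hacc
    rcases hacc with h | h
    · exact ⟨[], [], by simp, by simp, trivial, Sum.inl.inj h⟩
    · exact absurd h (by simp)
  | cons c rest ih =>
    intro j hacc
    rw [DFA.evalFrom] at hacc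
    cases c with
    | inl cl =>
      by_cases hg : cl.1 = j ∧ inc π₁ Y aV cl ∈ φ.range
      · have hstep : (MQ (r := r) π₁ φ Y aV i₁).step (.inl j) (.inl cl) = .inl cl.2.2 := by
          simp only [MQ]; rw [if_pos hg]
        rw [show List.foldl (MQ (r := r) π₁ φ Y aV i₁).step (.inl j) (.inl cl :: rest) =
          (MQ (r := r) π₁ φ Y aV i₁).evalFrom ((MQ (r := r) π₁ φ Y aV i₁).step (.inl j) (.inl cl)) rest
          from rfl, hstep] at hacc
        obtain ⟨run, tl, h1, h2, h3, h4⟩ := ih cl.2.2 hacc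
        exact ⟨cl :: run, tl, h1, by rw [List.map_cons, List.cons_append, h2],
          ⟨hg.1, hg.2, h3⟩, h4⟩
      · have hstep : (MQ (r := r) π₁ φ Y aV i₁).step (.inl j) (.inl cl) = .inr 1 := by
          simp only [MQ]; rw [if_neg hg]
        rw [show List.foldl (MQ (r := r) π₁ φ Y aV i₁).step (.inl j) (.inl cl :: rest) =
          (MQ (r := r) π₁ φ Y aV i₁).evalFrom ((MQ (r := r) π₁ φ Y aV i₁).step (.inl j) (.inl cl)) rest
          from rfl, hstep, MQ_dead] at hacc
        rcases hacc with h | h <;> simp at h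
    | inr t =>
      by_cases hj : j = i₁
      · have hstep : (MQ (r := r) π₁ φ Y aV i₁).step (.inl j) (.inr t) = .inr 0 := by
          simp only [MQ]; rw [if_pos hj]
        rw [show List.foldl (MQ (r := r) π₁ φ Y aV i₁).step (.inl j) (.inr t :: rest) =
          (MQ (r := r) π₁ φ Y aV i₁).evalFrom ((MQ (r := r) π₁ φ Y aV i₁).step (.inl j) (.inr t)) rest
          from rfl, hstep] at hacc
        cases rest with
        | nil => exact ⟨[], [t], by simp, by simp, trivial, hj⟩
        | cons c' rest' =>
          rw [show (MQ (r := r) π₁ φ Y aV i₁).evalFrom (.inr 0) (c' :: rest') =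
            (MQ (r := r) π₁ φ Y aV i₁).evalFrom ((MQ (r := r) π₁ φ Y aV i₁).step (.inr 0) c') rest'
            from rfl, show (MQ (r := r) π₁ φ Y aV i₁).step (Sum.inr 0) c' = Sum.inr 1 from rfl,
            MQ_dead] at hacc
          rcases hacc with h | h <;> simp at h
      · have hstep : (MQ (r := r) π₁ φ Y aV i₁).step (.inl j) (.inr t) = .inr 1 := by
          simp only [MQ]; rw [if_neg hj]
        rw [show List.foldl (MQ (r := r) π₁ φ Y aV i₁).step (.inl j) (.inr t :: rest) =
          (MQ (r := r) π₁ φ Y aV i₁).evalFrom ((MQ (r := r) π₁ φ Y aV i₁).step (.inl j) (.inr t)) rest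
          from rfl, hstep, MQ_dead] at hacc
        rcases hacc with h | h <;> simp at h

theorem MQ_complete (run : List (Fin m × Fin p × Fin m)) (tl : List (Fin r))
    (htl : tl.length ≤ 1) (hfits : RunFits π₁ φ Y aV i₁ run)
    (hend : RunEnd i₁ run = i₁) :
    (run.map Sum.inl ++ tl.map Sum.inr : List (CC m p r)) ∈ (MQ (r := r) π₁ φ Y aV i₁).accepts := by
  rw [DFA.mem_accepts, DFA.eval]
  rw [DFA.evalFrom_of_append]
  have h1 : (MQ (r := r) π₁ φ Y aV i₁).evalFrom (MQ (r := r) π₁ φ Y aV i₁).start (run.map Sum.inl) = .inl i₁ := by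
    rw [show (MQ (r := r) π₁ φ Y aV i₁).start = Sum.inl i₁ from rfl, MQ_run π₁ φ Y aV i₁ run i₁ hfits,
      hend]
  rw [h1]
  rcases tl with _ | ⟨t, tl'⟩
  · exact Or.inl rfl
  · rcases tl' with _ | ⟨t', tl''⟩
    · have e : (MQ (r := r) π₁ φ Y aV i₁).evalFrom (.inl i₁) ([t].map Sum.inr) =
          (MQ (r := r) π₁ φ Y aV i₁).step (.inl i₁) (.inr t) := rfl
      rw [e, show (MQ (r := r) π₁ φ Y aV i₁).step (.inl i₁) (.inr t) = .inr 0 by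
        simp [MQ]]
      exact Or.inr rfl
    · simp at htl

/-- The projection of letters to words over `A`. -/
def fproj : CC m p r → List A := Sum.elim (fun cl => [aV cl.2.1]) (fun _ => [])

theorem fproj_flatMap (run : List (Fin m × Fin p × Fin m)) (tl : List (Fin r)) :
    ((run.map Sum.inl ++ tl.map Sum.inr : List (CC m p r)).flatMap (fproj aV)) =
      projARun aV run := by
  rw [List.flatMap_append]
  have h1 : (run.map Sum.inl : List (CC m p r)).flatMap (fproj aV) = projARun aV run := by
    induction run with
    | nil => rfl
    | cons c l ih =>
      rw [List.map_cons, List.flatMap_cons, ih]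
      rfl
  have h2 : (tl.map Sum.inr : List (CC m p r)).flatMap (fproj aV) = [] := by
    induction tl with
    | nil => rfl
    | cons t l ih => rw [List.map_cons, List.flatMap_cons, ih]; rfl
  rw [h1, h2, List.append_nil]

theorem KK_regular (L : Language A) (hLreg : Auto.IsRegular L) :
    Auto.IsRegular (KK (r := r) π₁ φ Y aV i₁ L) := by
  obtain ⟨σ, hσ, M, hM⟩ := hLreg
  refine ⟨(Fin m ⊕ Fin 2) × σ, inferInstance,
    prodDFA (MQ (r := r) π₁ φ Y aV i₁) (comapDFA (fproj aV) M), ?_⟩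
  ext α
  rw [prodDFA_accepts, comapDFA_accepts, hM]
  constructor
  · rintro ⟨hacc, hproj⟩
    obtain ⟨run, tl, h1, h2, h3, h4⟩ := MQ_sound π₁ φ Y aV i₁ α i₁ hacc
    refine ⟨run, tl, h1, h2, h3, h4, ?_⟩
    rw [h2, fproj_flatMap] at hproj
    exact hproj
  · rintro ⟨run, tl, h1, h2, h3, h4, h5⟩
    subst h2
    exact ⟨MQ_complete π₁ φ Y aV i₁ run tl h1 h3 h4, by rw [fproj_flatMap]; exact h5⟩

end ConsDFA

end EstsyncAux

namespace EstsyncAux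

open Auto

section Chain

variable {A G : Type*} [Group G] (π₁ : FreeMonoid A →* G) (L : Language A)

theorem chain_ft (hπ₁ : Function.Surjective π₁)
    (hLonto : ∀ g : G, ∃ w ∈ L, evalW π₁ w = g) (N : ℕ)
    (hft : ∀ u ∈ L, ∀ v ∈ L, wdist π₁ (evalW π₁ u) (evalW π₁ v) ≤ 1 →
      ∀ n : ℕ, wdist π₁ (evalW π₁ (u.take n)) (evalW π₁ (v.take n)) ≤ N) :
    ∀ l : List G, (∀ x ∈ l, x ∈ gens π₁) → ∀ u ∈ L, ∀ v ∈ L,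
      evalW π₁ v = evalW π₁ u * l.prod →
      ∀ n : ℕ, wdist π₁ (evalW π₁ (u.take n)) (evalW π₁ (v.take n)) ≤ (l.length + 1) * N := by
  intro l
  induction l with
  | nil =>
    intro _ u hu v hv hev n
    have : wdist π₁ (evalW π₁ u) (evalW π₁ v) ≤ 1 := by
      rw [hev, List.prod_nil, mul_one, wdist_self]
      exact Nat.zero_le 1
    simpa using hft u hu v hv this n
  | cons x l ih =>
    intro hg u hu v hv hev n
    obtain ⟨u', hu', heu'⟩ := hLonto (evalW π₁ u * x)
    have h1 : wdist π₁ (evalW π₁ u) (evalW π₁ u') ≤ 1 := by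
      refine wdist_le_of_list π₁ (l := [x]) ?_ ?_ (by simp)
      · intro z hz
        rw [List.mem_singleton] at hz
        subst hz
        exact hg z (by simp)
      · rw [List.prod_singleton, heu']
        group
    have h2 := hft u hu u' hu' h1 n
    have h3 := ih (fun z hz => hg z (List.mem_cons_of_mem x hz)) u' hu' v hv
      (by rw [hev, heu', List.prod_cons]; group) n
    calc wdist π₁ (evalW π₁ (u.take n)) (evalW π₁ (v.take n)) ≤
        wdist π₁ (evalW π₁ (u.take n)) (evalW π₁ (u'.take n)) +
          wdist π₁ (evalW π₁ (u'.take n)) (evalW π₁ (v.take n)) :=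
        wdist_triangle π₁ hπ₁ _ _ _
      _ ≤ N + (l.length + 1) * N := Nat.add_le_add h2 h3
      _ ≤ ((x :: l).length + 1) * N := by
          rw [List.length_cons]
          ring_nf
          omega

theorem chain_ft' (hπ₁ : Function.Surjective π₁)
    (hLonto : ∀ g : G, ∃ w ∈ L, evalW π₁ w = g) (N : ℕ)
    (hft : ∀ u ∈ L, ∀ v ∈ L, wdist π₁ (evalW π₁ u) (evalW π₁ v) ≤ 1 →
      ∀ n : ℕ, wdist π₁ (evalW π₁ (u.take n)) (evalW π₁ (v.take n)) ≤ N)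
    (c : ℕ) :
    ∀ u ∈ L, ∀ v ∈ L, wdist π₁ (evalW π₁ u) (evalW π₁ v) ≤ c →
      ∀ n : ℕ, wdist π₁ (evalW π₁ (u.take n)) (evalW π₁ (v.take n)) ≤ (c + 1) * N := by
  intro u hu v hv hw n
  obtain ⟨l, hl, hg, hp⟩ := exists_list_of_wdist π₁ hπ₁ (evalW π₁ u) (evalW π₁ v)
  have := chain_ft π₁ L hπ₁ hLonto N hft l hg u hu v hv (by rw [hp]; group) n
  exact this.trans (Nat.mul_le_mul_right N (by omega))

end Chain

theorem preim_finite {G : Type*} [Group G] (φ : G →* G) (hker : (φ.ker : Set G).Finite)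
    {S : Set G} (hS : S.Finite) : {x : G | φ x ∈ S}.Finite := by
  have : {x : G | φ x ∈ S} = ⋃ b ∈ S, {x : G | φ x = b} := by
    ext x; simp
  rw [this]
  refine Set.Finite.biUnion hS fun b _ => ?_
  by_cases he : ∃ x₀ : G, φ x₀ = b
  · obtain ⟨x₀, hx₀⟩ := he
    refine Set.Finite.subset (hker.image fun z => x₀ * z) ?_
    intro x hx
    refine ⟨x₀⁻¹ * x, ?_, by group⟩
    show x₀⁻¹ * x ∈ φ.ker
    rw [MonoidHom.mem_ker, map_mul, map_inv, hx₀, hx]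
    group
  · refine Set.Finite.subset Set.finite_empty ?_
    intro x hx
    exact absurd ⟨x, hx⟩ he

end EstsyncAux

/-- If `φ` is an endomorphism of `G` with finite kernel whose image is
`L`-quasiconvex, then there is a finite alphabet `C`, a surjective `π₃ : C* → G` and an
automatic structure `K` for `π₃` such that the synchronous BRP holds for `(φ, K, L)`. -/
theorem estsync {A G : Type*} [Fintype A] [Group G]
    (π₁ : FreeMonoid A →* G) (hπ₁ : Function.Surjective π₁)
    (L : Language A) (hL : IsAutomaticStructure π₁ L)
    (φ : G →* G) (hker : (φ.ker : Set G).Finite)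
    (hqc : IsQuasiconvex π₁ L φ.range) :
    ∃ (C : Type) (_ : Fintype C) (π₃ : FreeMonoid C →* G),
      Function.Surjective π₃ ∧
        ∃ K : Language C, IsAutomaticStructure π₃ K ∧ SyncBRP π₃ π₁ φ K L := by
  classical
  open EstsyncAux in
  obtain ⟨k, hk⟩ := hqc
  -- ball data
  have hball : {y : G | wdist π₁ 1 y ≤ k}.Finite := ball_finite π₁ hπ₁ k
  haveI : Finite ↥{y : G | wdist π₁ 1 y ≤ k} := hball
  obtain ⟨m, ⟨eB⟩⟩ := Finite.exists_equiv_fin ↥{y : G | wdist π₁ 1 y ≤ k}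
  set Y : Fin m → G := fun i => ((eB.symm i : ↥{y : G | wdist π₁ 1 y ≤ k}) : G) with hYdef
  have hY : ∀ i, wdist π₁ 1 (Y i) ≤ k := fun i => (eB.symm i).2
  have hYinj : Function.Injective Y :=
    Subtype.val_injective.comp eB.symm.injective
  have hYsur : ∀ y : G, wdist π₁ 1 y ≤ k → ∃ i, Y i = y := by
    intro y hy
    exact ⟨eB ⟨y, hy⟩, by simp [hYdef]⟩
  have h1mem : wdist π₁ 1 (1 : G) ≤ k := by rw [wdist_self]; exact Nat.zero_le k
  set i₁ : Fin m := eB ⟨1, h1mem⟩ with hi₁def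
  have hi₁ : Y i₁ = 1 := by simp [hYdef, hi₁def]
  -- alphabet data
  set p := Fintype.card A with hpdef
  set eA := Fintype.equivFin A with heAdef
  set aV : Fin p → A := fun i => eA.symm i with haVdef
  set aI : A → Fin p := fun a => eA a with haIdef
  have haV : ∀ a, aV (aI a) = a := fun a => eA.symm_apply_apply a
  -- kernel data
  haveI : Finite ↥(φ.ker : Set G) := hker
  obtain ⟨r, ⟨eK⟩⟩ := Finite.exists_equiv_fin ↥(φ.ker : Set G)
  set Z : Fin r → G := fun t => ((eK.symm t : ↥(φ.ker : Set G)) : G) with hZdef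
  have hZ : ∀ t, φ (Z t) = 1 := by
    intro t
    have := (eK.symm t).2
    rwa [SetLike.mem_coe, MonoidHom.mem_ker] at this
  have hZsur : ∀ z : G, φ z = 1 → ∃ t, Z t = z := by
    intro z hz
    exact ⟨eK ⟨z, by rw [SetLike.mem_coe, MonoidHom.mem_ker]; exact hz⟩, by simp [hZdef]⟩
  -- section of φ
  set sec : G → G := fun x => if hx : x ∈ φ.range then (MonoidHom.mem_range.mp hx).choose
    else 1 with hsecdef
  have hsec : ∀ x ∈ φ.range, φ (sec x) = x := by
    intro x hx
    simp only [hsecdef, dif_pos hx]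
    exact (MonoidHom.mem_range.mp hx).choose_spec
  -- the new structure
  set π₃ := pi3 π₁ Y aV Z sec with hπ₃def
  set K := KK (r := r) π₁ φ Y aV i₁ L with hKdef
  -- onto
  have hKonto : ∀ g : G, ∃ α ∈ K, evalW π₃ α = g :=
    konto π₁ φ Y aV Z sec i₁ L aI k haV hYinj hYsur hi₁ hZsur hsec hk hL.onto
  have hπ₃surj : Function.Surjective π₃ := by
    intro g
    obtain ⟨α, _, hα⟩ := hKonto g
    exact ⟨FreeMonoid.ofList α, hα⟩
  -- fellow traveller constant for L, in ℕ
  obtain ⟨NL, hft0⟩ := hL.ft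
  have hftN : ∀ u ∈ L, ∀ v ∈ L, wdist π₁ (evalW π₁ u) (evalW π₁ v) ≤ 1 →
      ∀ n : ℕ, wdist π₁ (evalW π₁ (u.take n)) (evalW π₁ (v.take n)) ≤ NL := by
    intro u hu v hv hw n
    exact_mod_cast hft0 u hu v hv hw n
  -- the structural lemma
  have hkpre : ∀ α ∈ K, ∃ w ∈ L, φ (evalW π₃ α) = evalW π₁ w ∧
      ∀ n : ℕ, wdist π₁ (φ (evalW π₃ (α.take n))) (evalW π₁ (w.take n)) ≤ k :=
    fun α hα => kpre π₁ φ Y aV Z sec i₁ L hsec hZ hi₁ hα k hY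
  -- bound on the π₁-distance of φ-images of π₃-close points
  set N₁ := Finset.univ.sup (fun c : CC m p r => wdist π₁ 1 (φ (π₃ (FreeMonoid.of c)))) with hN₁
  have hφdist : ∀ g h : G, wdist π₃ g h ≤ 1 → wdist π₁ (φ g) (φ h) ≤ N₁ := by
    intro g h hw
    obtain ⟨l, hl, hg, hp⟩ := exists_list_of_wdist π₃ hπ₃surj g h
    have hlen : l.length ≤ 1 := le_trans (le_of_eq hl) hw
    rcases l with _ | ⟨x, _ | ⟨y, l⟩⟩
    · have hgh : g⁻¹ * h = 1 := by rw [← hp]; simp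
      have hgh2 : g = h := inv_mul_eq_one.mp hgh
      rw [hgh2, wdist_self]
      exact Nat.zero_le _
    · have hx : x ∈ gens π₃ := hg x (by simp)
      have hval : wdist π₁ (φ g) (φ h) = wdist π₁ 1 (φ x) := by
        rw [wdist_one_eq, ← map_inv, ← map_mul]
        congr 2
        rw [← hp, List.prod_singleton]
      rw [hval]
      rcases hx with ⟨c, hc⟩ | ⟨c, hc⟩
      · rw [← hc, hN₁]
        exact Finset.le_sup (f := fun c => wdist π₁ 1 (φ (π₃ (FreeMonoid.of c))))
          (Finset.mem_univ c)
      · rw [← hc, map_inv, wdist_one_inv, hN₁]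
        exact Finset.le_sup (f := fun c => wdist π₁ 1 (φ (π₃ (FreeMonoid.of c))))
          (Finset.mem_univ c)
    · simp at hlen
  -- ft property of K
  set R := (N₁ + 1) * NL + k + k with hR
  have hF : {x : G | φ x ∈ {y : G | wdist π₁ 1 y ≤ R}}.Finite :=
    preim_finite φ hker (ball_finite π₁ hπ₁ R)
  set NK := hF.toFinset.sup (fun x => wdist π₃ 1 x) with hNK
  have hKft : ∀ u ∈ K, ∀ v ∈ K, wdist π₃ (evalW π₃ u) (evalW π₃ v) ≤ 1 →
      ∀ n : ℕ, wdist π₃ (evalW π₃ (u.take n)) (evalW π₃ (v.take n)) ≤ NK := by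
    intro u hu v hv hw n
    obtain ⟨wu, hwuL, hwu1, hwu2⟩ := hkpre u hu
    obtain ⟨wv, hwvL, hwv1, hwv2⟩ := hkpre v hv
    have hclose : wdist π₁ (evalW π₁ wu) (evalW π₁ wv) ≤ N₁ := by
      rw [← hwu1, ← hwv1]
      exact hφdist _ _ hw
    have hch := chain_ft' π₁ L hπ₁ hL.onto NL hftN N₁ wu hwuL wv hwvL hclose n
    have hbig : wdist π₁ (φ (evalW π₃ (u.take n))) (φ (evalW π₃ (v.take n))) ≤ R := by
      calc wdist π₁ (φ (evalW π₃ (u.take n))) (φ (evalW π₃ (v.take n))) ≤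
          wdist π₁ (φ (evalW π₃ (u.take n))) (evalW π₁ (wu.take n)) +
            wdist π₁ (evalW π₁ (wu.take n)) (φ (evalW π₃ (v.take n))) :=
          wdist_triangle π₁ hπ₁ _ _ _
        _ ≤ k + (wdist π₁ (evalW π₁ (wu.take n)) (evalW π₁ (wv.take n)) +
            wdist π₁ (evalW π₁ (wv.take n)) (φ (evalW π₃ (v.take n)))) :=
          Nat.add_le_add (hwu2 n) (wdist_triangle π₁ hπ₁ _ _ _)
        _ ≤ k + ((N₁ + 1) * NL + k) := by
            refine Nat.add_le_add_left (Nat.add_le_add hch ?_) k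
            rw [wdist_comm]
            exact hwv2 n
        _ ≤ R := by rw [hR]; omega
    have hdF : (evalW π₃ (u.take n))⁻¹ * evalW π₃ (v.take n) ∈ hF.toFinset := by
      rw [Set.Finite.mem_toFinset]
      simp only [Set.mem_setOf_eq]
      rw [map_mul, map_inv, ← wdist_one_eq]
      exact hbig
    rw [wdist_one_eq]
    exact Finset.le_sup hdF
  refine ⟨CC m p r, inferInstance, π₃, hπ₃surj, K, ?_, ?_⟩
  · refine ⟨KK_regular π₁ φ Y aV i₁ L hL.regular, hKonto, ⟨NK, ?_⟩⟩
    intro u hu v hv hw n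
    exact_mod_cast hKft u hu v hv hw n
  · refine ⟨k + NL, ?_⟩
    intro x α hα β hβ heq n
    obtain ⟨w, hwL, hw1, hw2⟩ := hkpre α hα
    have hββ : evalW π₁ β = evalW π₁ w := heq.trans hw1
    have h0 : wdist π₁ (evalW π₁ w) (evalW π₁ β) ≤ 1 := by
      rw [hββ, wdist_self]
      exact Nat.zero_le 1
    have hprefix := hftN w hwL β hβ h0 n
    rw [map_mul, wdist_mul_left]
    calc wdist π₁ (φ (evalW π₃ (α.take n))) (evalW π₁ (β.take n)) ≤
        wdist π₁ (φ (evalW π₃ (α.take n))) (evalW π₁ (w.take n)) +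
          wdist π₁ (evalW π₁ (w.take n)) (evalW π₁ (β.take n)) :=
        wdist_triangle π₁ hπ₁ _ _ _
      _ ≤ k + NL := Nat.add_le_add (hw2 n) hprefix
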